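/- Let Ŝ_{αβγδ} be the unique totally symmetric array on {1,2,3,4}^4 with Ŝ(x,x,x,x) = -18 x1 x2 x3 x4 + 4√3 x1 x4^3 - 4√3 x2^3 x3 + 3 x2^2 x4^2 - 9 x1^2 x3^2. Then ∑_{s=1}^3 (Υs)_{αβ}(Υs)_{γδ} = Ŝ_{αβγδ} + (3/4)(π_{αγ}π_{βδ} + π_{αδ}π_{βγ}) for all α, β, γ, δ ∈ {1,2,3,4}. -/
import Mathlib


noncomputable section
open Complex Matrix Finset

/-- The real number √3 viewed as a complex number. -/
def s3 : ℂ := (Real.sqrt 3 : ℝ)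

/-- The standard symplectic form matrix `π` on `ℂ⁴`: `π₁₃ = π₂₄ = 1`, `π₃₁ = π₄₂ = -1`. -/
def P : Matrix (Fin 4) (Fin 4) ℂ :=
  !![0, 0, 1, 0;
     0, 0, 0, 1;
     -1, 0, 0, 0;
     0, -1, 0, 0]

/-- The inverse matrix `π^{αβ}` of the symplectic form matrix. -/
def Pinv : Matrix (Fin 4) (Fin 4) ℂ := P⁻¹

/-- The symmetric matrices `Υ₁, Υ₂, Υ₃` of the irreducible `sp(1) ⊂ sp(2)` representation. -/
def U : Fin 3 → Matrix (Fin 4) (Fin 4) ℂ :=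
  ![!![0, 0, -3*I/2, 0;
      0, 0, 0, -I/2;
      -3*I/2, 0, 0, 0;
      0, -I/2, 0, 0],
    !![0, 0, 0, s3/2;
      0, 1, -s3/2, 0;
      0, -s3/2, 0, 0;
      s3/2, 0, 0, 1],
    !![0, 0, 0, I*s3/2;
      0, I, I*s3/2, 0;
      0, I*s3/2, 0, 0;
      I*s3/2, 0, 0, -I]]

/-- The quartic form of the cubic discriminant:
`Ŝ(x,x,x,x) = -18 x₁x₂x₃x₄ + 4√3 x₁x₄³ - 4√3 x₂³x₃ + 3 x₂²x₄² - 9 x₁²x₃²`. -/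
def Q (x : Fin 4 → ℂ) : ℂ :=
  -18 * x 0 * x 1 * x 2 * x 3 + 4 * s3 * x 0 * (x 3)^3 - 4 * s3 * (x 1)^3 * x 2
    + 3 * (x 1)^2 * (x 3)^2 - 9 * (x 0)^2 * (x 2)^2

/-- A 4-index array is totally symmetric if it is invariant under all permutations
of its indices. -/
def TotallySymmetric (S : Fin 4 → Fin 4 → Fin 4 → Fin 4 → ℂ) : Prop :=
  ∀ a b c d : Fin 4,
    S a b c d = S b a c d ∧ S a b c d = S a c b d ∧ S a b c d = S a b d c

/-- `S` is the totally symmetric array whose associated quartic form is the cubic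
discriminant `Ŝ(x,x,x,x)` (obtained from it by polarization). -/
def IsCubicDiscriminantTensor (S : Fin 4 → Fin 4 → Fin 4 → Fin 4 → ℂ) : Prop :=
  TotallySymmetric S ∧
    ∀ x : Fin 4 → ℂ,
      (∑ α : Fin 4, ∑ β : Fin 4, ∑ γ : Fin 4, ∑ δ : Fin 4,
        S α β γ δ * x α * x β * x γ * x δ) = Q x

def z1 : Fin 4 → Fin 4 → Fin 4 → Fin 4 → ℤ :=
  ![![![![0, 0, 0, 0], ![0, 0, 0, 0], ![0, 0, -6, 0], ![0, 0, 0, 0]],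
   ![![0, 0, 0, 0], ![0, 0, 0, 0], ![0, 0, 0, -3], ![0, 0, -3, 0]],
   ![![0, 0, -6, 0], ![0, 0, 0, -3], ![-6, 0, 0, 0], ![0, -3, 0, 0]],
   ![![0, 0, 0, 0], ![0, 0, -3, 0], ![0, -3, 0, 0], ![0, 0, 0, 0]]],
   ![![![0, 0, 0, 0], ![0, 0, 0, 0], ![0, 0, 0, -3], ![0, 0, -3, 0]],
   ![![0, 0, 0, 0], ![0, 0, 0, 0], ![0, 0, 0, 0], ![0, 0, 0, 2]],
   ![![0, 0, 0, -3], ![0, 0, 0, 0], ![0, 0, 0, 0], ![-3, 0, 0, 0]],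
   ![![0, 0, -3, 0], ![0, 0, 0, 2], ![-3, 0, 0, 0], ![0, 2, 0, 0]]],
   ![![![0, 0, -6, 0], ![0, 0, 0, -3], ![-6, 0, 0, 0], ![0, -3, 0, 0]],
   ![![0, 0, 0, -3], ![0, 0, 0, 0], ![0, 0, 0, 0], ![-3, 0, 0, 0]],
   ![![-6, 0, 0, 0], ![0, 0, 0, 0], ![0, 0, 0, 0], ![0, 0, 0, 0]],
   ![![0, -3, 0, 0], ![-3, 0, 0, 0], ![0, 0, 0, 0], ![0, 0, 0, 0]]],
   ![![![0, 0, 0, 0], ![0, 0, -3, 0], ![0, -3, 0, 0], ![0, 0, 0, 0]],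
   ![![0, 0, -3, 0], ![0, 0, 0, 2], ![-3, 0, 0, 0], ![0, 2, 0, 0]],
   ![![0, -3, 0, 0], ![-3, 0, 0, 0], ![0, 0, 0, 0], ![0, 0, 0, 0]],
   ![![0, 0, 0, 0], ![0, 2, 0, 0], ![0, 0, 0, 0], ![0, 0, 0, 0]]]]

def z2 : Fin 4 → Fin 4 → Fin 4 → Fin 4 → ℤ :=
  ![![![![0, 0, 0, 0], ![0, 0, 0, 0], ![0, 0, 0, 0], ![0, 0, 0, 0]],
   ![![0, 0, 0, 0], ![0, 0, 0, 0], ![0, 0, 0, 0], ![0, 0, 0, 0]],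
   ![![0, 0, 0, 0], ![0, 0, 0, 0], ![0, 0, 0, 0], ![0, 0, 0, 0]],
   ![![0, 0, 0, 0], ![0, 0, 0, 0], ![0, 0, 0, 0], ![0, 0, 0, 1]]],
   ![![![0, 0, 0, 0], ![0, 0, 0, 0], ![0, 0, 0, 0], ![0, 0, 0, 0]],
   ![![0, 0, 0, 0], ![0, 0, -1, 0], ![0, -1, 0, 0], ![0, 0, 0, 0]],
   ![![0, 0, 0, 0], ![0, -1, 0, 0], ![0, 0, 0, 0], ![0, 0, 0, 0]],
   ![![0, 0, 0, 0], ![0, 0, 0, 0], ![0, 0, 0, 0], ![0, 0, 0, 0]]],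
   ![![![0, 0, 0, 0], ![0, 0, 0, 0], ![0, 0, 0, 0], ![0, 0, 0, 0]],
   ![![0, 0, 0, 0], ![0, -1, 0, 0], ![0, 0, 0, 0], ![0, 0, 0, 0]],
   ![![0, 0, 0, 0], ![0, 0, 0, 0], ![0, 0, 0, 0], ![0, 0, 0, 0]],
   ![![0, 0, 0, 0], ![0, 0, 0, 0], ![0, 0, 0, 0], ![0, 0, 0, 0]]],
   ![![![0, 0, 0, 0], ![0, 0, 0, 0], ![0, 0, 0, 0], ![0, 0, 0, 1]],
   ![![0, 0, 0, 0], ![0, 0, 0, 0], ![0, 0, 0, 0], ![0, 0, 0, 0]],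
   ![![0, 0, 0, 0], ![0, 0, 0, 0], ![0, 0, 0, 0], ![0, 0, 0, 0]],
   ![![0, 0, 0, 1], ![0, 0, 0, 0], ![0, 0, 0, 0], ![1, 0, 0, 0]]]]


/-- The explicit totally symmetric tensor `Ŝ`. -/
def E0 : Fin 4 → Fin 4 → Fin 4 → Fin 4 → ℂ := fun a b c d =>
  (z1 a b c d : ℂ)/4 + (z2 a b c d : ℂ) * s3

lemma z1sym : ∀ a b c d : Fin 4,
    z1 a b c d = z1 b a c d ∧ z1 a b c d = z1 a c b d ∧ z1 a b c d = z1 a b d c := by decide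
lemma z2sym : ∀ a b c d : Fin 4,
    z2 a b c d = z2 b a c d ∧ z2 a b c d = z2 a c b d ∧ z2 a b c d = z2 a b d c := by decide

lemma symE0 : TotallySymmetric E0 := by
  intro a b c d
  refine ⟨?_, ?_, ?_⟩ <;> unfold E0
  · rw [(z1sym a b c d).1, (z2sym a b c d).1]
  · rw [(z1sym a b c d).2.1, (z2sym a b c d).2.1]
  · rw [(z1sym a b c d).2.2, (z2sym a b c d).2.2]

set_option maxHeartbeats 1000000 in
lemma formE0 : ∀ x : Fin 4 → ℂ,
    (∑ α : Fin 4, ∑ β : Fin 4, ∑ γ : Fin 4, ∑ δ : Fin 4,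
      E0 α β γ δ * x α * x β * x γ * x δ) = Q x := by
  intro x
  simp only [Fin.sum_univ_four, E0, Q, z1, z2, Matrix.cons_val_zero, Matrix.cons_val_one,
    Matrix.head_cons, Matrix.cons_val_two, Matrix.tail_cons, Matrix.cons_val_three]
  push_cast
  ring

lemma s3sq : s3 ^ 2 = 3 := by
  rw [pow_two]
  simp only [s3, ← Complex.ofReal_mul, Real.mul_self_sqrt (by norm_num : (0:ℝ) ≤ 3)]
  norm_num

set_option maxHeartbeats 4000000 in
lemma hU : ∀ a b c d : Fin 4, (∑ s : Fin 3, U s a b * U s c d)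
    = E0 a b c d + 3/4 * (P a c * P b d + P a d * P b c) := by
  intro a b c d
  fin_cases a <;> fin_cases b <;> fin_cases c <;> fin_cases d <;>
    simp [U, P, E0, z1, z2, Fin.sum_univ_three, Matrix.vecHead, Matrix.vecTail] <;>
    ring_nf <;>
    simp [s3sq, Complex.I_sq] <;>
    try ring_nf

/-- The quadrilinear form associated to a 4-index array. -/
def Mq (D : Fin 4 → Fin 4 → Fin 4 → Fin 4 → ℂ) (x y z w : Fin 4 → ℂ) : ℂ :=
  ∑ α : Fin 4, ∑ β : Fin 4, ∑ γ : Fin 4, ∑ δ : Fin 4,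
    D α β γ δ * x α * y β * z γ * w δ

variable {D : Fin 4 → Fin 4 → Fin 4 → Fin 4 → ℂ}

lemma Mq_swap12 (hD : TotallySymmetric D) (x y z w : Fin 4 → ℂ) :
    Mq D x y z w = Mq D y x z w := by
  unfold Mq
  rw [Finset.sum_comm]
  refine Finset.sum_congr rfl fun b _ => Finset.sum_congr rfl fun a _ =>
    Finset.sum_congr rfl fun c _ => Finset.sum_congr rfl fun d _ => ?_
  rw [(hD a b c d).1]; ring

lemma Mq_swap23 (hD : TotallySymmetric D) (x y z w : Fin 4 → ℂ) :
    Mq D x y z w = Mq D x z y w := by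
  unfold Mq
  refine Finset.sum_congr rfl fun a _ => ?_
  rw [Finset.sum_comm]
  refine Finset.sum_congr rfl fun c _ => Finset.sum_congr rfl fun b _ =>
    Finset.sum_congr rfl fun d _ => ?_
  rw [(hD a b c d).2.1]; ring

lemma Mq_swap34 (hD : TotallySymmetric D) (x y z w : Fin 4 → ℂ) :
    Mq D x y z w = Mq D x y w z := by
  unfold Mq
  refine Finset.sum_congr rfl fun a _ => Finset.sum_congr rfl fun b _ => ?_
  rw [Finset.sum_comm]
  refine Finset.sum_congr rfl fun d _ => Finset.sum_congr rfl fun c _ => ?_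
  rw [(hD a b c d).2.2]; ring

lemma Mq_add1 (x x' y z w : Fin 4 → ℂ) :
    Mq D (x + x') y z w = Mq D x y z w + Mq D x' y z w := by
  simp only [Mq, Pi.add_apply, mul_add, add_mul, Finset.sum_add_distrib]

lemma Mq_add2 (x y y' z w : Fin 4 → ℂ) :
    Mq D x (y + y') z w = Mq D x y z w + Mq D x y' z w := by
  simp only [Mq, Pi.add_apply, mul_add, add_mul, Finset.sum_add_distrib]

lemma Mq_add3 (x y z z' w : Fin 4 → ℂ) :
    Mq D x y (z + z') w = Mq D x y z w + Mq D x y z' w := by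
  simp only [Mq, Pi.add_apply, mul_add, add_mul, Finset.sum_add_distrib]

lemma Mq_add4 (x y z w w' : Fin 4 → ℂ) :
    Mq D x y z (w + w') = Mq D x y z w + Mq D x y z w' := by
  simp only [Mq, Pi.add_apply, mul_add, add_mul, Finset.sum_add_distrib]

lemma Mq_neg4 (x y z w : Fin 4 → ℂ) :
    Mq D x y z (-w) = -Mq D x y z w := by
  simp only [Mq, Pi.neg_apply, mul_neg, neg_mul, Finset.sum_neg_distrib]
lemma Mq_neg1 (x y z w : Fin 4 → ℂ) : Mq D (-x) y z w = -Mq D x y z w := by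
  simp only [Mq, Pi.neg_apply, mul_neg, neg_mul, Finset.sum_neg_distrib]
lemma Mq_neg2 (x y z w : Fin 4 → ℂ) : Mq D x (-y) z w = -Mq D x y z w := by
  simp only [Mq, Pi.neg_apply, mul_neg, neg_mul, Finset.sum_neg_distrib]
lemma Mq_neg3 (x y z w : Fin 4 → ℂ) : Mq D x y (-z) w = -Mq D x y z w := by
  simp only [Mq, Pi.neg_apply, mul_neg, neg_mul, Finset.sum_neg_distrib]

lemma Mq_zero (hD : TotallySymmetric D) (h0 : ∀ x, Mq D x x x x = 0) :
    ∀ x y z w, Mq D x y z w = 0 := by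
  have c12 := Mq_swap12 hD
  have c23 := Mq_swap23 hD
  have c34 := Mq_swap34 hD
  have e1 : ∀ x y : Fin 4 → ℂ, Mq D (x+y) (x+y) (x+y) (x+y) =
      Mq D x x x x + 4 * Mq D x x x y + 6 * Mq D x x y y + 4 * Mq D x y y y
        + Mq D y y y y := by
    intro x y
    simp only [Mq_add1, Mq_add2, Mq_add3, Mq_add4]
    rw [c12 y x x x, c23 x y x x, c34 x x y x, c23 y y x x, c12 y x y x,
      c34 x y y x, c12 y x x y, c23 x y x y, c34 y y y x, c23 y y x y, c12 y x y y]
    ring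
  have key : ∀ x y : Fin 4 → ℂ,
      4 * Mq D x x x y + 6 * Mq D x x y y + 4 * Mq D x y y y = 0 := by
    intro x y
    have h := e1 x y
    rw [h0 x, h0 y, h0 (x+y)] at h
    linear_combination -h
  have hB : ∀ x y : Fin 4 → ℂ, Mq D x x y y = 0 := by
    intro x y
    have k1 := key x y
    have k2 := key x (-y)
    simp only [Mq_neg2, Mq_neg3, Mq_neg4, neg_neg] at k2
    linear_combination (k1 + k2) / 12
  have hA : ∀ x y : Fin 4 → ℂ, Mq D x x x y = 0 := by
    intro x y
    have k1 := key x y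
    have k3 := key x (y + y)
    simp only [Mq_add2, Mq_add3, Mq_add4] at k3
    have b1 := hB x y
    have k2 := key x (-y)
    simp only [Mq_neg2, Mq_neg3, Mq_neg4, neg_neg] at k2
    linear_combination k1/3 - k3/24 - b1
  have hC : ∀ x y : Fin 4 → ℂ, Mq D x y y y = 0 := by
    intro x y
    have k1 := key x y
    have hb := hB x y
    have ha := hA x y
    linear_combination k1/4 - ha - (3/2) * hb
  have hB2 : ∀ x z y : Fin 4 → ℂ, Mq D x z y y = 0 := by
    intro x z y
    have h := hB (x + z) y
    simp only [Mq_add1, Mq_add2] at h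
    rw [hB x y, hB z y, c12 z x y y] at h
    linear_combination h / 2
  intro x z y w
  have h := hB2 x z (y + w)
  simp only [Mq_add3, Mq_add4] at h
  rw [hB2 x z y, hB2 x z w, c34 x z w y] at h
  linear_combination h / 2

def ev (a : Fin 4) : Fin 4 → ℂ := fun i => if i = a then 1 else 0

lemma Mq_basis (a b c d : Fin 4) : Mq D (ev a) (ev b) (ev c) (ev d) = D a b c d := by
  simp [Mq, ev, mul_ite, ite_mul, mul_zero, zero_mul, mul_one, one_mul,
    Finset.sum_ite_eq', Finset.sum_ite_eq]


/-- `∑_{s=1}^3 (Υs)_{αβ}(Υs)_{γδ} = Ŝ_{αβγδ} + (3/4)(π_{αγ}π_{βδ} + π_{αδ}π_{βγ})`. -/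
theorem Upsilon_product_decomposition (S : Fin 4 → Fin 4 → Fin 4 → Fin 4 → ℂ)
    (hS : IsCubicDiscriminantTensor S) :
    ∀ α β γ δ : Fin 4,
      (∑ s : Fin 3, U s α β * U s γ δ)
        = S α β γ δ + (3/4) * (P α γ * P β δ + P α δ * P β γ) := by
  intro α β γ δ
  have hzero := Mq_zero (D := fun a b c d => S a b c d - E0 a b c d)
    (fun a b c d => by
      obtain ⟨p1, p2, p3⟩ := hS.1 a b c d
      obtain ⟨q1, q2, q3⟩ := symE0 a b c d
      exact ⟨by dsimp only; rw [p1, q1], by dsimp only; rw [p2, q2],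
        by dsimp only; rw [p3, q3]⟩)
    (fun x => by
      simp only [Mq, sub_mul, Finset.sum_sub_distrib]
      rw [hS.2 x, formE0 x, sub_self])
    (ev α) (ev β) (ev γ) (ev δ)
  rw [Mq_basis] at hzero
  have hSE : S α β γ δ = E0 α β γ δ := sub_eq_zero.mp hzero
  rw [hU α β γ δ, hSE]
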